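/- For all real X, Y and γ, one has ∫∫_Γ z₂ n(z₁) n(z₂) dz₁ dz₂ = n(X)·Φ(−γX − Y) − (γ/√(1+γ²))·n( Y/√(1+γ²) )·Φ( −((1+γ²)X + γY)/√(1+γ²) ), where Γ = {(z₁, z₂) ∈ ℝ² : z₁ > Y + γ z₂ and z₂ > X}. -/

import Mathlib

open Real MeasureTheory Filter Set

/-- The standard normal density `n(x) = e^{−x²/2}/√(2π)`. -/
noncomputable def stdPDF (x : ℝ) : ℝ := Real.exp (-(x ^ 2) / 2) / Real.sqrt (2 * Real.pi)

/-- The standard normal cumulative distribution function. -/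
noncomputable def stdCDF (z : ℝ) : ℝ := ∫ y in Set.Iic z, stdPDF y

lemma sqrt_two_pi_pos : 0 < Real.sqrt (2 * Real.pi) :=
  Real.sqrt_pos.2 (by positivity)

lemma stdPDF_nonneg (x : ℝ) : 0 ≤ stdPDF x := by
  unfold stdPDF; positivity

lemma stdPDF_le (x : ℝ) : stdPDF x ≤ (Real.sqrt (2 * Real.pi))⁻¹ := by
  unfold stdPDF
  rw [div_le_iff₀ sqrt_two_pi_pos, inv_mul_cancel₀ sqrt_two_pi_pos.ne']
  exact Real.exp_le_one_iff.2 (by nlinarith [sq_nonneg x])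

lemma stdPDF_neg (x : ℝ) : stdPDF (-x) = stdPDF x := by
  simp [stdPDF]

lemma continuous_stdPDF : Continuous stdPDF := by
  unfold stdPDF
  exact (Real.continuous_exp.comp (by continuity)).div_const _

lemma integrable_stdPDF : Integrable stdPDF := by
  have h := integrable_exp_neg_mul_sq (b := 2⁻¹) (by norm_num)
  have := h.div_const (Real.sqrt (2 * Real.pi))
  refine this.congr (Eventually.of_forall fun x => ?_)
  unfold stdPDF
  ring_nf

lemma integrable_abs_mul_stdPDF : Integrable (fun x => |x| * stdPDF x) := by
  have h := (integrable_mul_exp_neg_mul_sq (b := 2⁻¹) (by norm_num)).abs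
  have := h.div_const (Real.sqrt (2 * Real.pi))
  refine this.congr (Eventually.of_forall fun x => ?_)
  simp only [abs_mul]
  rw [abs_of_pos (Real.exp_pos _)]
  unfold stdPDF
  ring_nf

lemma integral_stdPDF : ∫ x, stdPDF x = 1 := by
  unfold stdPDF
  have h : ∀ x : ℝ, Real.exp (-(x ^ 2) / 2) / Real.sqrt (2 * Real.pi)
      = Real.exp (-(2⁻¹:ℝ) * x ^ 2) / Real.sqrt (2 * Real.pi) := by
    intro x; ring_nf
  simp_rw [h, integral_div, integral_gaussian]
  rw [div_eq_one_iff_eq sqrt_two_pi_pos.ne']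
  congr 1
  rw [div_eq_iff (by norm_num : ((2:ℝ)⁻¹) ≠ 0)]
  ring

lemma stdCDF_nonneg (z : ℝ) : 0 ≤ stdCDF z :=
  setIntegral_nonneg measurableSet_Iic fun x _ => stdPDF_nonneg x

lemma stdCDF_le_one (z : ℝ) : stdCDF z ≤ 1 := by
  rw [← integral_stdPDF]
  exact setIntegral_le_integral integrable_stdPDF
    (Eventually.of_forall fun x => stdPDF_nonneg x)

lemma integral_Ioi_stdPDF (a : ℝ) : ∫ x in Set.Ioi a, stdPDF x = stdCDF (-a) := by
  rw [show (∫ x in Set.Ioi a, stdPDF x) = ∫ x in Set.Ioi a, stdPDF (-x) by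
    simp_rw [stdPDF_neg]]
  rw [integral_comp_neg_Ioi]
  rfl

lemma hasDerivAt_stdCDF (z : ℝ) : HasDerivAt stdCDF (stdPDF z) z := by
  have key : ∀ w : ℝ, stdCDF w = stdCDF 0 + ∫ t in (0:ℝ)..w, stdPDF t := by
    intro w
    have h0 := intervalIntegral.integral_Iic_sub_Iic (μ := volume) (f := stdPDF) (a := 0) (b := w)
      integrable_stdPDF.integrableOn integrable_stdPDF.integrableOn
    unfold stdCDF
    linarith
  have h : HasDerivAt (fun w => stdCDF 0 + ∫ t in (0:ℝ)..w, stdPDF t) (stdPDF z) z := by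
    refine HasDerivAt.const_add _ ?_
    exact intervalIntegral.integral_hasDerivAt_right
      integrable_stdPDF.intervalIntegrable
      (continuous_stdPDF.stronglyMeasurableAtFilter _ _)
      continuous_stdPDF.continuousAt
  exact h.congr_of_eventuallyEq (Eventually.of_forall key)

lemma continuous_stdCDF : Continuous stdCDF :=
  continuous_iff_continuousAt.2 fun z => (hasDerivAt_stdCDF z).continuousAt

lemma hasDerivAt_stdPDF (z : ℝ) : HasDerivAt stdPDF (-z * stdPDF z) z := by
  have h1 : HasDerivAt (fun x : ℝ => -(x ^ 2) / 2) (-z) z := by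
    have := ((hasDerivAt_pow 2 z).neg.div_const 2)
    exact this.congr_deriv (by ring)
  have h2 := (h1.exp).div_const (Real.sqrt (2 * Real.pi))
  refine h2.congr_deriv ?_
  unfold stdPDF
  ring

lemma tendsto_stdPDF_atTop : Tendsto stdPDF atTop (nhds 0) := by
  have h1 : Tendsto (fun x : ℝ => -(x ^ 2) / 2) atTop atBot := by
    apply Tendsto.atBot_div_const (by norm_num)
    exact tendsto_neg_atBot_iff.2 (tendsto_pow_atTop two_ne_zero)
  have h3 := (Real.tendsto_exp_atBot.comp h1).div_const (Real.sqrt (2 * Real.pi))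
  rw [zero_div] at h3
  exact h3.congr fun x => rfl

lemma integral_Ioi_comp_add (f : ℝ → ℝ) (a d : ℝ) :
    ∫ x in Set.Ioi a, f (x + d) = ∫ x in Set.Ioi (a + d), f x := by
  have A : MeasurableEmbedding (· + d : ℝ → ℝ) :=
    (Homeomorph.addRight d).isClosedEmbedding.measurableEmbedding
  have h := A.setIntegral_map (μ := volume) f (Set.Ioi (a + d))
  rw [map_add_right_eq_self] at h
  rw [show ((· + d) : ℝ → ℝ) ⁻¹' Set.Ioi (a + d) = Set.Ioi a from by ext x; simp] at h
  exact h.symm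

lemma integral_Ioi_stdPDF_affine (a d : ℝ) {c : ℝ} (hc : 0 < c) :
    ∫ x in Set.Ioi a, stdPDF (c * x + d) = c⁻¹ * stdCDF (-(c * a + d)) := by
  have h := integral_comp_mul_left_Ioi (fun y => stdPDF (y + d)) a hc
  simp only [smul_eq_mul] at h
  rw [h, integral_Ioi_comp_add, integral_Ioi_stdPDF]

lemma stdPDF_mul (Y γ z : ℝ) :
    stdPDF z * stdPDF (Y + γ * z)
      = stdPDF (Y / Real.sqrt (1 + γ ^ 2))
        * stdPDF (Real.sqrt (1 + γ ^ 2) * z + γ * Y / Real.sqrt (1 + γ ^ 2)) := by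
  have hs : (0:ℝ) < 1 + γ ^ 2 := by positivity
  have hsq : Real.sqrt (1 + γ ^ 2) ^ 2 = 1 + γ ^ 2 := Real.sq_sqrt hs.le
  have hne : Real.sqrt (1 + γ ^ 2) ≠ 0 := (Real.sqrt_pos.2 hs).ne'
  unfold stdPDF
  rw [div_mul_div_comm, div_mul_div_comm, ← Real.exp_add, ← Real.exp_add]
  have hsq4 : Real.sqrt (1 + γ ^ 2) ^ 4 = (1 + γ ^ 2) ^ 2 := by
    rw [show (4:ℕ) = 2 * 2 from rfl, pow_mul, hsq]
  congr 2
  field_simp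
  ring_nf
  simp only [hsq, hsq4]
  ring

/-- `∫∫_Γ z₂ n(z₁) n(z₂) dz₁ dz₂` over `Γ = {z₁ > Y + γ z₂, z₂ > X}`. -/
theorem J3_eq (X Y γ : ℝ) :
    (∫ z₂ in Set.Ioi X, ∫ z₁ in Set.Ioi (Y + γ * z₂), z₂ * stdPDF z₁ * stdPDF z₂)
      = stdPDF X * stdCDF (-(γ * X) - Y)
        - γ / Real.sqrt (1 + γ ^ 2) * stdPDF (Y / Real.sqrt (1 + γ ^ 2))
            * stdCDF (-((1 + γ ^ 2) * X + γ * Y) / Real.sqrt (1 + γ ^ 2)) := by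
  have hs : (0:ℝ) < 1 + γ ^ 2 := by positivity
  have hu : (0:ℝ) < Real.sqrt (1 + γ ^ 2) := Real.sqrt_pos.2 hs
  have hu2 : Real.sqrt (1 + γ ^ 2) * Real.sqrt (1 + γ ^ 2) = 1 + γ ^ 2 :=
    Real.mul_self_sqrt hs.le
  -- inner integral
  have inner : ∀ z : ℝ, (∫ z₁ in Set.Ioi (Y + γ * z), z * stdPDF z₁ * stdPDF z)
      = z * stdPDF z * stdCDF (-Y - γ * z) := by
    intro z
    have e : ∀ z₁, z * stdPDF z₁ * stdPDF z = (z * stdPDF z) * stdPDF z₁ := fun z₁ => by ring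
    simp_rw [e]
    rw [integral_const_mul, integral_Ioi_stdPDF]
    have : -(Y + γ * z) = -Y - γ * z := by ring
    rw [this]
  simp_rw [inner]
  -- derivative setup
  set f : ℝ → ℝ := fun z => -(stdPDF z * stdCDF (-Y - γ * z)) with hfdef
  set g : ℝ → ℝ :=
    fun z => z * stdPDF z * stdCDF (-Y - γ * z) + γ * (stdPDF z * stdPDF (Y + γ * z)) with hgdef
  have hderiv : ∀ z : ℝ, HasDerivAt f (g z) z := by
    intro z
    have h1 := hasDerivAt_stdPDF z
    have hin : HasDerivAt (fun w : ℝ => -Y - γ * w) (-γ) z := by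
      simpa using ((hasDerivAt_id z).const_mul γ).const_sub (-Y)
    have h2 : HasDerivAt (fun w => stdCDF (-Y - γ * w)) (stdPDF (-Y - γ * z) * (-γ)) z :=
      HasDerivAt.comp z (hasDerivAt_stdCDF _) hin
    have h3 := (h1.mul h2).neg
    refine h3.congr_deriv ?_
    have : stdPDF (-Y - γ * z) = stdPDF (Y + γ * z) := by
      rw [show -Y - γ * z = -(Y + γ * z) by ring, stdPDF_neg]
    rw [hgdef]
    simp only [this]
    ring
  -- integrability
  have meas1 : AEStronglyMeasurable (fun z : ℝ => z * stdPDF z * stdCDF (-Y - γ * z))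
      (volume.restrict (Set.Ioi X)) := by
    refine Continuous.aestronglyMeasurable ?_
    exact (continuous_id.mul continuous_stdPDF).mul (continuous_stdCDF.comp (by continuity))
  have bound1 : ∀ z : ℝ, ‖z * stdPDF z * stdCDF (-Y - γ * z)‖ ≤ |z| * stdPDF z := by
    intro z
    rw [Real.norm_eq_abs, abs_mul, abs_mul, abs_of_nonneg (stdPDF_nonneg z)]
    have : |stdCDF (-Y - γ * z)| ≤ 1 := by
      rw [abs_le]
      exact ⟨by linarith [stdCDF_nonneg (-Y - γ * z)], stdCDF_le_one _⟩
    nlinarith [abs_nonneg z, stdPDF_nonneg z, abs_nonneg (stdCDF (-Y - γ * z)),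
      mul_nonneg (abs_nonneg z) (stdPDF_nonneg z)]
  have int1 : IntegrableOn (fun z : ℝ => z * stdPDF z * stdCDF (-Y - γ * z)) (Set.Ioi X) :=
    (integrable_abs_mul_stdPDF.mono'
      ((continuous_id.mul continuous_stdPDF).mul
        (continuous_stdCDF.comp (by continuity))).aestronglyMeasurable
      (Eventually.of_forall bound1)).integrableOn
  have int2 : IntegrableOn (fun z : ℝ => stdPDF z * stdPDF (Y + γ * z)) (Set.Ioi X) := by
    refine (Integrable.mono' ((integrable_stdPDF.const_mul ((Real.sqrt (2 * Real.pi))⁻¹)) )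
      ?_ (Eventually.of_forall fun z => ?_)).integrableOn
    · exact (continuous_stdPDF.mul (continuous_stdPDF.comp (by continuity))).aestronglyMeasurable
    · rw [Real.norm_eq_abs, abs_mul, abs_of_nonneg (stdPDF_nonneg z),
        abs_of_nonneg (stdPDF_nonneg _), mul_comm]
      exact mul_le_mul_of_nonneg_right (stdPDF_le _) (stdPDF_nonneg z)
  have intg : IntegrableOn g (Set.Ioi X) := int1.add (int2.const_mul γ)
  -- limit at infinity
  have htends : Tendsto f atTop (nhds 0) := by
    have hb : ∀ z : ℝ, |f z| ≤ stdPDF z := by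
      intro z
      rw [hfdef]
      simp only [abs_neg, abs_mul, abs_of_nonneg (stdPDF_nonneg z)]
      have h1 : |stdCDF (-Y - γ * z)| ≤ 1 := by
        rw [abs_le]
        exact ⟨by linarith [stdCDF_nonneg (-Y - γ * z)], stdCDF_le_one _⟩
      nlinarith [stdPDF_nonneg z, abs_nonneg (stdCDF (-Y - γ * z))]
    refine tendsto_of_tendsto_of_tendsto_of_le_of_le
      (g := fun z => -stdPDF z) (h := stdPDF) ?_ ?_ (fun z => ?_) (fun z => ?_)
    · simpa using tendsto_stdPDF_atTop.neg
    · exact tendsto_stdPDF_atTop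
    · exact (abs_le.1 (hb z)).1
    · exact (abs_le.1 (hb z)).2
  -- FTC on (X, ∞)
  have hFTC : ∫ z in Set.Ioi X, g z = 0 - f X :=
    integral_Ioi_of_hasDerivAt_of_tendsto' (fun z _ => hderiv z) intg htends
  rw [hgdef] at hFTC
  rw [integral_add int1 (int2.const_mul γ), integral_const_mul] at hFTC
  have key : ∫ z in Set.Ioi X, z * stdPDF z * stdCDF (-Y - γ * z)
      = stdPDF X * stdCDF (-Y - γ * X)
        - γ * ∫ z in Set.Ioi X, stdPDF z * stdPDF (Y + γ * z) := by
    have hfX : f X = -(stdPDF X * stdCDF (-Y - γ * X)) := rfl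
    rw [hfX] at hFTC
    linarith
  rw [key]
  -- Gaussian product integral
  have hprod : ∫ z in Set.Ioi X, stdPDF z * stdPDF (Y + γ * z)
      = stdPDF (Y / Real.sqrt (1 + γ ^ 2))
        * ((Real.sqrt (1 + γ ^ 2))⁻¹
          * stdCDF (-(Real.sqrt (1 + γ ^ 2) * X + γ * Y / Real.sqrt (1 + γ ^ 2)))) := by
    simp_rw [stdPDF_mul Y γ]
    rw [integral_const_mul, integral_Ioi_stdPDF_affine _ _ hu]
  rw [hprod]
  have harg : -(Real.sqrt (1 + γ ^ 2) * X + γ * Y / Real.sqrt (1 + γ ^ 2))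
      = -((1 + γ ^ 2) * X + γ * Y) / Real.sqrt (1 + γ ^ 2) := by
    field_simp
    linear_combination (-X) * hu2
  rw [harg]
  have harg2 : -Y - γ * X = -(γ * X) - Y := by ring
  rw [harg2]
  field_simp
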